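/- Let P : [0, ∞) → [0, ∞) be bounded and Riemann integrable on every bounded interval with limsup_{t→∞} P(t)/t = 0, and fix r_0 > 0. Then there exists a decreasing function d : (r_0, ∞) → [0, ∞) with lim_{R→∞} d(R) = 0 such that ∫_r^R P(t)/t² dt ≤ d(R) · ln(R/r) for all r_0 ≤ r < R < ∞. -/

import Mathlib

/-!
Replace `P t / t` by its decreasing majorant `p t = sup_{s ≥ t} P s / s` and let `d R` be the
mean of `p` over `[r₀, R]` against `dt / t`. Because `p` is decreasing, its `dt / t`-mean over
`[r, R]` is at most `p r`, hence at most its mean over `[r₀, r]`. This gives both that `d` is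
decreasing and that `∫_r^R P/t² ≤ ∫_r^R p/t ≤ d R · log (R / r)`. Finally `d R → 0` because
`p → 0` while `log (R / r₀) → ∞`.
-/

open Real Set Filter MeasureTheory intervalIntegral Topology

theorem Filter.tendsto_zero_of_limsup_coe_eq_zero {α : Type*} {l : Filter α} {f : α → ℝ}
    (h : limsup (fun x => (f x : EReal)) l = 0) (hf : ∀ᶠ x in l, 0 ≤ f x) :
    Tendsto f l (𝓝 0) := by
  refine tendsto_order.2 ⟨fun c hc => hf.mono fun x hx => hc.trans_le hx, fun ε hε => ?_⟩
  have hlt : limsup (fun x => (f x : EReal)) l < ε := by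
    rw [h]
    exact_mod_cast hε
  filter_upwards [eventually_lt_of_limsup_lt hlt] with x hx
  exact_mod_cast hx

theorem bddAbove_image_Ici_of_eventually_le {f : ℝ → ℝ} {a c : ℝ}
    (hloc : ∀ b, a ≤ b → BddAbove (f '' Icc a b)) (hev : ∀ᶠ t in atTop, f t ≤ c) :
    BddAbove (f '' Ici a) := by
  obtain ⟨T, hT⟩ := eventually_atTop.1 hev
  have hsplit : Ici a ⊆ Icc a (max a T) ∪ Ici T := fun t ht => by
    by_cases htT : t ≤ max a T
    · exact Or.inl ⟨ht, htT⟩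
    · exact Or.inr (le_of_max_le_right (not_le.1 htT).le)
  have htail : BddAbove (f '' Ici T) := ⟨c, by rintro _ ⟨t, ht, rfl⟩; exact hT t ht⟩
  refine ((hloc _ (le_max_left a T)).union htail).mono ?_
  rw [← image_union]
  exact image_mono hsplit

noncomputable def tailSup {α : Type*} [Preorder α] (f : α → ℝ) (t : α) : ℝ :=
  sSup (f '' Ici t)

section TailSup

variable {α : Type*} {f : α → ℝ} {a t : α}

theorem le_tailSup [Preorder α] (hf : BddAbove (f '' Ici a)) (ht : a ≤ t) : f t ≤ tailSup f t :=
  le_csSup (hf.mono (image_mono (Ici_subset_Ici.2 ht))) ⟨t, self_mem_Ici, rfl⟩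

theorem tailSup_le [Preorder α] {c : ℝ} (h : ∀ s, t ≤ s → f s ≤ c) : tailSup f t ≤ c :=
  csSup_le ⟨f t, t, self_mem_Ici, rfl⟩ (by rintro _ ⟨s, hs, rfl⟩; exact h s hs)

theorem antitoneOn_tailSup [Preorder α] (hf : BddAbove (f '' Ici a)) :
    AntitoneOn (tailSup f) (Ici a) := fun _ hs t _ hst =>
  csSup_le_csSup (hf.mono (image_mono (Ici_subset_Ici.2 hs))) ⟨f t, t, self_mem_Ici, rfl⟩
    (image_mono (Ici_subset_Ici.2 hst))

theorem tendsto_tailSup [SemilatticeSup α] [Nonempty α] (hf : BddAbove (f '' Ici a))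
    (hlim : Tendsto f atTop (𝓝 0)) : Tendsto (tailSup f) atTop (𝓝 0) := by
  refine tendsto_order.2 ⟨fun c hc => ?_, fun ε hε => ?_⟩
  · filter_upwards [hlim.eventually (lt_mem_nhds hc), eventually_ge_atTop a] with t hct hat
    exact hct.trans_le (le_tailSup hf hat)
  · obtain ⟨T, hT⟩ := eventually_atTop.1 (hlim.eventually (eventually_le_nhds (half_pos hε)))
    filter_upwards [eventually_ge_atTop T] with t ht
    exact (tailSup_le fun s hs => hT s (ht.trans hs)).trans_lt (half_lt_self hε)

end TailSup

section AntitoneWeighted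

variable {g w : ℝ → ℝ} {a b : ℝ}

theorem AntitoneOn.intervalIntegrable_mul (hab : a ≤ b) (hg : AntitoneOn g (Icc a b))
    (hw : ContinuousOn w (Icc a b)) : IntervalIntegrable (fun t => g t * w t) volume a b := by
  rw [← uIcc_of_le hab] at hg hw
  exact hg.intervalIntegrable.mul_continuousOn hw

theorem AntitoneOn.integral_mul_le (hab : a ≤ b) (hg : AntitoneOn g (Icc a b))
    (hw : ContinuousOn w (Icc a b)) (hw0 : ∀ t ∈ Icc a b, 0 ≤ w t) :
    ∫ t in a..b, g t * w t ≤ g a * ∫ t in a..b, w t := by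
  rw [← intervalIntegral.integral_const_mul]
  refine integral_mono_on hab (hg.intervalIntegrable_mul hab hw) ?_ fun t ht =>
    mul_le_mul_of_nonneg_right (hg ⟨le_rfl, hab⟩ ht ht.1) (hw0 t ht)
  rw [← uIcc_of_le hab] at hw
  exact (continuousOn_const.mul hw).intervalIntegrable

theorem AntitoneOn.mul_integral_le (hab : a ≤ b) (hg : AntitoneOn g (Icc a b))
    (hw : ContinuousOn w (Icc a b)) (hw0 : ∀ t ∈ Icc a b, 0 ≤ w t) :
    g b * ∫ t in a..b, w t ≤ ∫ t in a..b, g t * w t := by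
  rw [← intervalIntegral.integral_const_mul]
  refine integral_mono_on hab ?_ (hg.intervalIntegrable_mul hab hw) fun t ht =>
    mul_le_mul_of_nonneg_right (hg ht ⟨hab, le_rfl⟩ ht.2) (hw0 t ht)
  rw [← uIcc_of_le hab] at hw
  exact (continuousOn_const.mul hw).intervalIntegrable

end AntitoneWeighted

section LogAvg

variable {g : ℝ → ℝ} {a r R : ℝ}

theorem AntitoneOn.integral_div_le (hr : 0 < r) (hrR : r ≤ R) (hg : AntitoneOn g (Icc r R)) :
    ∫ t in r..R, g t / t ≤ g r * log (R / r) := by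
  have hw : ContinuousOn (fun t : ℝ => t⁻¹) (Icc r R) :=
    continuousOn_inv₀.mono fun t ht => (hr.trans_le ht.1).ne'
  simpa only [div_eq_mul_inv, integral_inv (notMem_uIcc_of_lt hr (hr.trans_le hrR))] using
    hg.integral_mul_le hrR hw fun t ht => inv_nonneg.2 (hr.le.trans ht.1)

theorem AntitoneOn.mul_log_le_integral_div (hr : 0 < r) (hrR : r ≤ R)
    (hg : AntitoneOn g (Icc r R)) : g R * log (R / r) ≤ ∫ t in r..R, g t / t := by
  have hw : ContinuousOn (fun t : ℝ => t⁻¹) (Icc r R) :=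
    continuousOn_inv₀.mono fun t ht => (hr.trans_le ht.1).ne'
  simpa only [div_eq_mul_inv, integral_inv (notMem_uIcc_of_lt hr (hr.trans_le hrR))] using
    hg.mul_integral_le hrR hw fun t ht => inv_nonneg.2 (hr.le.trans ht.1)

theorem AntitoneOn.intervalIntegrable_div_self (ha : 0 < a) (hg : AntitoneOn g (Ici a))
    (har : a ≤ r) (hrR : r ≤ R) : IntervalIntegrable (fun t => g t / t) volume r R := by
  have hw : ContinuousOn (fun t : ℝ => t⁻¹) (Icc r R) :=
    continuousOn_inv₀.mono fun t ht => (ha.trans_le (har.trans ht.1)).ne'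
  simpa only [div_eq_mul_inv] using
    (hg.mono fun t ht => har.trans ht.1).intervalIntegrable_mul hrR hw

theorem log_div_add_log_div (ha : 0 < a) (hr : 0 < r) (hR : 0 < R) :
    log (r / a) + log (R / r) = log (R / a) := by
  rw [← log_mul (by positivity) (by positivity), mul_comm, div_mul_div_cancel₀ hr.ne']

/-- Since `∫_a^R dt / t = log (R / a)`, this is the mean of `g` over `[a, R]` against `dt / t`. -/
noncomputable def logAvg (g : ℝ → ℝ) (a R : ℝ) : ℝ :=
  (∫ t in a..R, g t / t) / log (R / a)

/-- The `dt / t`-mean of `g` on `[r, R]` is at most that on `[a, r]`; `g r` separates them. -/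
theorem AntitoneOn.integral_div_mul_log_le (ha : 0 < a) (hg : AntitoneOn g (Ici a))
    (har : a ≤ r) (hrR : r ≤ R) :
    (∫ t in r..R, g t / t) * log (r / a) ≤ (∫ t in a..r, g t / t) * log (R / r) := by
  have hr : 0 < r := ha.trans_le har
  have hupper := (hg.mono fun t ht => har.trans ht.1).integral_div_le hr hrR
  have hlower := (hg.mono fun t ht => ht.1).mul_log_le_integral_div ha har
  have hhead : 0 ≤ log (r / a) := log_nonneg ((one_le_div ha).2 har)
  have htail : 0 ≤ log (R / r) := log_nonneg ((one_le_div hr).2 hrR)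
  calc (∫ t in r..R, g t / t) * log (r / a) ≤ g r * log (R / r) * log (r / a) :=
        mul_le_mul_of_nonneg_right hupper hhead
    _ = g r * log (r / a) * log (R / r) := by ring
    _ ≤ (∫ t in a..r, g t / t) * log (R / r) := mul_le_mul_of_nonneg_right hlower htail

theorem AntitoneOn.integral_div_add (ha : 0 < a) (hg : AntitoneOn g (Ici a)) (har : a ≤ r)
    (hrR : r ≤ R) :
    (∫ t in a..r, g t / t) + ∫ t in r..R, g t / t = ∫ t in a..R, g t / t :=
  integral_add_adjacent_intervals (hg.intervalIntegrable_div_self ha le_rfl har)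
    (hg.intervalIntegrable_div_self ha har hrR)

theorem AntitoneOn.antitoneOn_logAvg (ha : 0 < a) (hg : AntitoneOn g (Ici a)) :
    AntitoneOn (logAvg g a) (Ioi a) := by
  intro r (hr : a < r) R (hR : a < R) hrR
  have hhead := log_pos ((one_lt_div ha).2 hr)
  rw [logAvg, logAvg, div_le_div_iff₀ (log_pos ((one_lt_div ha).2 hR)) hhead,
    ← hg.integral_div_add ha hr.le hrR, ← log_div_add_log_div ha (ha.trans hr) (ha.trans hR)]
  linarith [hg.integral_div_mul_log_le ha hr.le hrR]

theorem AntitoneOn.integral_div_le_logAvg_mul_log (ha : 0 < a) (hg : AntitoneOn g (Ici a))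
    (har : a ≤ r) (hrR : r < R) :
    ∫ t in r..R, g t / t ≤ logAvg g a R * log (R / r) := by
  have hr := ha.trans_le har
  rw [logAvg, div_mul_eq_mul_div, le_div_iff₀ (log_pos ((one_lt_div ha).2 (har.trans_lt hrR))),
    ← hg.integral_div_add ha har hrR.le, ← log_div_add_log_div ha hr (hr.trans hrR)]
  linarith [hg.integral_div_mul_log_le ha har hrR.le]

theorem logAvg_nonneg (ha : 0 < a) (haR : a ≤ R) (hg : ∀ t ∈ Ici a, 0 ≤ g t) :
    0 ≤ logAvg g a R :=
  div_nonneg (integral_nonneg haR fun t ht => div_nonneg (hg t ht.1) (ha.le.trans ht.1))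
    (log_nonneg ((one_le_div ha).2 haR))

end LogAvg

theorem AntitoneOn.tendsto_logAvg {g : ℝ → ℝ} {a : ℝ} (ha : 0 < a) (hg : AntitoneOn g (Ici a))
    (hg0 : ∀ t ∈ Ici a, 0 ≤ g t) (hlim : Tendsto g atTop (𝓝 0)) :
    Tendsto (logAvg g a) atTop (𝓝 0) := by
  refine tendsto_order.2 ⟨fun c hc => (eventually_ge_atTop a).mono fun R haR =>
    hc.trans_le (logAvg_nonneg ha haR hg0), fun ε hε => ?_⟩
  obtain ⟨T, hT⟩ := eventually_atTop.1
    ((hlim.eventually (eventually_le_nhds (half_pos hε))).and (eventually_ge_atTop a))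
  obtain ⟨hgT, haT⟩ := hT T le_rfl
  have hlog : Tendsto (fun R => log (R / a)) atTop atTop :=
    tendsto_log_atTop.comp (tendsto_id.atTop_div_const ha)
  have hhead : Tendsto (fun R => (∫ t in a..T, g t / t) / log (R / a)) atTop (𝓝 0) :=
    tendsto_const_nhds.div_atTop hlog
  filter_upwards [hhead.eventually (gt_mem_nhds (half_pos hε)), eventually_gt_atTop T]
    with R hheadR hTR
  have hT0 : 0 < T := ha.trans_le haT
  have hlogR : 0 < log (R / a) := log_pos ((one_lt_div ha).2 (haT.trans_lt hTR))
  have htail : ∫ t in T..R, g t / t ≤ ε / 2 * log (R / a) :=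
    calc ∫ t in T..R, g t / t ≤ g T * log (R / T) :=
          (hg.mono fun t ht => haT.trans ht.1).integral_div_le hT0 hTR.le
      _ ≤ ε / 2 * log (R / a) := by
          rw [← log_div_add_log_div ha hT0 (hT0.trans hTR)]
          gcongr
          · exact log_nonneg ((one_le_div hT0).2 hTR.le)
          · exact le_add_of_nonneg_left (log_nonneg ((one_le_div ha).2 haT))
  calc logAvg g a R
      = (∫ t in a..T, g t / t) / log (R / a) + (∫ t in T..R, g t / t) / log (R / a) := by
        rw [logAvg, ← hg.integral_div_add ha haT hTR.le, add_div]
    _ < ε / 2 + ε / 2 := add_lt_add_of_lt_of_le hheadR ((div_le_iff₀ hlogR).2 htail)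
    _ = ε := add_halves ε

theorem bddAbove_div_self_image_Icc {P : ℝ → ℝ} {a b C : ℝ} (ha : 0 < a)
    (hC : ∀ t ∈ Icc a b, P t ≤ C) : BddAbove ((fun t => P t / t) '' Icc a b) := by
  refine ⟨max C 0 / a, ?_⟩
  rintro _ ⟨t, ht, rfl⟩
  exact div_le_div₀ (le_max_right C 0) ((hC t ht).trans (le_max_left C 0)) ha ht.1

theorem IntervalIntegrable.div_sq {P : ℝ → ℝ} {r R : ℝ} (hP : IntervalIntegrable P volume r R)
    (hr : 0 < r) (hrR : r ≤ R) : IntervalIntegrable (fun t => P t / t ^ 2) volume r R := by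
  have hw : ContinuousOn (fun t : ℝ => (t ^ 2)⁻¹) (uIcc r R) := by
    rw [uIcc_of_le hrR]
    exact (continuousOn_pow 2).inv₀ fun t ht => pow_ne_zero 2 (hr.trans_le ht.1).ne'
  simpa only [div_eq_mul_inv] using hP.mul_continuousOn hw

/-- For `P ≥ 0` bounded and integrable on bounded intervals with
`limsup_{t→∞} P(t)/t = 0`, and `r₀ > 0`, there is a decreasing function
`d : (r₀, ∞) → [0, ∞)` with `d(R) → 0` such that
`∫_r^R P(t)/t² dt ≤ d(R) ln(R/r)` for all `r₀ ≤ r < R`. -/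
theorem stmt8 (P : ℝ → ℝ) (hpos : ∀ t : ℝ, 0 ≤ t → 0 ≤ P t)
    (hbdd : ∀ b : ℝ, 0 < b → ∃ Cb : ℝ, ∀ t ∈ Set.Icc (0:ℝ) b, P t ≤ Cb)
    (hInt : ∀ b : ℝ, IntervalIntegrable P volume 0 b)
    (hlimsup : Filter.limsup (fun t : ℝ => ((P t / t : ℝ) : EReal))
        Filter.atTop = 0)
    (r₀ : ℝ) (hr₀ : 0 < r₀) :
    ∃ d : ℝ → ℝ, AntitoneOn d (Set.Ioi r₀) ∧ (∀ R : ℝ, r₀ < R → 0 ≤ d R) ∧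
      Filter.Tendsto d Filter.atTop (nhds 0) ∧
      ∀ r R : ℝ, r₀ ≤ r → r < R →
        (∫ t in r..R, P t / t ^ 2) ≤ d R * Real.log (R / r) := by
  set q : ℝ → ℝ := fun t => P t / t
  have hq0 : ∀ t ∈ Ici r₀, 0 ≤ q t := fun t ht =>
    div_nonneg (hpos t (hr₀.le.trans ht)) (hr₀.le.trans ht)
  have hq : Tendsto q atTop (𝓝 0) :=
    tendsto_zero_of_limsup_coe_eq_zero hlimsup ((eventually_ge_atTop r₀).mono hq0)
  have hqbdd : BddAbove (q '' Ici r₀) := by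
    refine bddAbove_image_Ici_of_eventually_le (fun b hb => ?_)
      (hq.eventually (eventually_le_nhds one_pos))
    obtain ⟨C, hC⟩ := hbdd b (hr₀.trans_le hb)
    exact bddAbove_div_self_image_Icc hr₀ fun t ht => hC t ⟨hr₀.le.trans ht.1, ht.2⟩
  have hp : AntitoneOn (tailSup q) (Ici r₀) := antitoneOn_tailSup hqbdd
  have hp0 : ∀ t ∈ Ici r₀, 0 ≤ tailSup q t := fun t ht => (hq0 t ht).trans (le_tailSup hqbdd ht)
  refine ⟨logAvg (tailSup q) r₀, hp.antitoneOn_logAvg hr₀,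
    fun R hR => logAvg_nonneg hr₀ hR.le hp0, hp.tendsto_logAvg hr₀ hp0 (tendsto_tailSup hqbdd hq),
    fun r R hr hrR => le_trans ?_ (hp.integral_div_le_logAvg_mul_log hr₀ hr hrR)⟩
  have hr0 : 0 < r := hr₀.trans_le hr
  have hPint : IntervalIntegrable P volume r R :=
    (hInt R).mono_set (uIcc_subset_uIcc (mem_uIcc_of_le hr0.le hrR.le) right_mem_uIcc)
  refine integral_mono_on hrR.le (hPint.div_sq hr0 hrR.le)
    (hp.intervalIntegrable_div_self hr₀ hr hrR.le) fun t ht => ?_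
  rw [sq, ← div_div]
  exact div_le_div_of_nonneg_right (le_tailSup hqbdd (hr.trans ht.1)) (hr0.trans_le ht.1).le
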